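/- Let μ ≠ 0, t > 0. With f_{μ,t} the density of the last zero crossing time, for all small ε > 0: liminf_{r→∞} (1/r) log ∫_{t-ε}^{t} f_{μ√r,t}(a) da ≥ -μ²t/2, and lim_{ε→0⁺} limsup_{r→∞} (1/r) log ∫_{t-ε}^{t} f_{μ√r,t}(a) da ≤ -μ²t/2. -/

import Mathlib

open Real Filter MeasureTheory

/-- Density of the last zero crossing time of a Brownian motion with drift `μ` on `[0,t]`. -/
noncomputable def lastZeroDensity (μ t a : ℝ) : ℝ :=
  Real.exp (-(μ ^ 2) * t / 2) / (π * Real.sqrt (a * (t - a))) +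
    (μ ^ 2 / (2 * π)) * ∫ y in a..t, Real.exp (-(μ ^ 2) * y / 2) / Real.sqrt (a * (y - a))

/-! On `(t - ε, t)` the density is squeezed between the constant `e^{-m²t/2} / (π t)` (as
`√(a (t - a)) ≤ t` and the integral term is nonnegative) and
`e^{-m²s/2} / (π √s) · ((t - a)^{-1/2} + m² √(t - a))` with `s = t - ε` (every exponential and
every `1/√a` is largest at the left end `s`). Integrating, with `m² = μ² r`, gives
`(1/r) log ∫ ≥ -μ²t/2 + O(1/r)` and, via `log x ≤ x`,
`(1/r) log ∫ ≤ -μ²(t - ε)/2 + O(ε^{3/2}) + O(1/r)`.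
The lower bound needs the density to be integrable, hence measurable: the parametric interval
integral is measurable as a partial integral over `ℝ × ℝ`. -/

open Set intervalIntegral Topology

theorem measurable_intervalIntegral_of_uncurry {F : ℝ → ℝ → ℝ}
    (hF : Measurable (Function.uncurry F)) (b : ℝ) :
    Measurable fun a => ∫ y in a..b, F a y := by
  have hIoc : ∀ u v : ℝ → ℝ, Measurable u → Measurable v →
      Measurable fun a => ∫ y in Ioc (u a) (v a), F a y := by
    intro u v hu hv
    have hS : MeasurableSet {p : ℝ × ℝ | p.2 ∈ Ioc (u p.1) (v p.1)} :=
      (measurableSet_lt (hu.comp measurable_fst) measurable_snd).inter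
        (measurableSet_le measurable_snd (hv.comp measurable_fst))
    have hG := (hF.indicator hS).stronglyMeasurable.integral_prod_right' (ν := volume)
    convert hG.measurable using 1
    funext a
    rw [← MeasureTheory.integral_indicator measurableSet_Ioc]
    simp only [indicator_apply, mem_ofPred_eq, Function.uncurry_apply_pair]
  exact (hIoc id (fun _ => b) measurable_id measurable_const).sub
    (hIoc (fun _ => b) id measurable_const measurable_id)

theorem measurable_lastZeroDensity (m t : ℝ) : Measurable (lastZeroDensity m t) := by
  have hK : Measurable (Function.uncurry fun a y : ℝ =>
      exp (-(m ^ 2) * y / 2) / √(a * (y - a))) := by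
    fun_prop
  have := measurable_intervalIntegral_of_uncurry hK t
  unfold lastZeroDensity
  fun_prop

theorem integral_rpow_neg_half (x : ℝ) :
    ∫ u in (0 : ℝ)..x, u ^ (-(1 / 2) : ℝ) = 2 * √x := by
  rw [integral_rpow (Or.inl (by norm_num)), zero_rpow (by norm_num),
    show (-(1 / 2) : ℝ) + 1 = 1 / 2 by norm_num, ← sqrt_eq_rpow]
  ring

theorem integral_sqrt {x : ℝ} (hx : 0 ≤ x) :
    ∫ u in (0 : ℝ)..x, √u = 2 / 3 * x * √x := by
  simp only [sqrt_eq_rpow]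
  rw [integral_rpow (Or.inl (by norm_num)), zero_rpow (by norm_num),
    show (1 / 2 : ℝ) + 1 = 1 + 1 / 2 by norm_num, rpow_add' hx (by norm_num), rpow_one]
  ring

theorem intervalIntegrable_sub_rpow {r : ℝ} (hr : -1 < r) (c a b : ℝ) :
    IntervalIntegrable (fun y => (y - c) ^ r) volume a b := by
  simpa using (intervalIntegrable_rpow' hr (a := a - c) (b := b - c)).comp_sub_right c

theorem intervalIntegrable_rsub_rpow {r : ℝ} (hr : -1 < r) (c a b : ℝ) :
    IntervalIntegrable (fun y => (c - y) ^ r) volume a b := by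
  simpa using (intervalIntegrable_rpow' hr (a := c - a) (b := c - b)).comp_sub_left c

theorem exp_div_le_lastZeroDensity {m t a : ℝ} (hat : a ≤ t) :
    exp (-(m ^ 2) * t / 2) / (π * √(a * (t - a))) ≤ lastZeroDensity m t a := by
  have hint := integral_nonneg (μ := volume) hat fun y _ =>
    div_nonneg (exp_nonneg (-(m ^ 2) * y / 2)) (sqrt_nonneg (a * (y - a)))
  have hcoef : 0 ≤ m ^ 2 / (2 * π) := by positivity
  unfold lastZeroDensity
  linarith [mul_nonneg hcoef hint]

theorem lastZeroDensity_nonneg {m t a : ℝ} (hat : a ≤ t) : 0 ≤ lastZeroDensity m t a :=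
  (by positivity : (0 : ℝ) ≤ _).trans (exp_div_le_lastZeroDensity hat)

theorem exp_div_le_lastZeroDensity_of_mem_Ioo {m t a : ℝ} (ha : a ∈ Ioo 0 t) :
    exp (-(m ^ 2) * t / 2) / (π * t) ≤ lastZeroDensity m t a := by
  have hsqrt : √(a * (t - a)) ≤ t :=
    sqrt_le_iff.2 ⟨ha.1.trans ha.2 |>.le, by nlinarith [ha.1, ha.2]⟩
  have hpos : 0 < √(a * (t - a)) := sqrt_pos.2 (mul_pos ha.1 (sub_pos.2 ha.2))
  refine le_trans ?_ (exp_div_le_lastZeroDensity ha.2.le)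
  gcongr

theorem integral_exp_div_sqrt_le {m s a t : ℝ} (hs : 0 < s) (hsa : s ≤ a) (hat : a ≤ t) :
    ∫ y in a..t, exp (-(m ^ 2) * y / 2) / √(a * (y - a)) ≤
      exp (-(m ^ 2) * s / 2) / √s * (2 * √(t - a)) := by
  have hbound : ∀ y ∈ Ioc a t, exp (-(m ^ 2) * y / 2) / √(a * (y - a)) ≤
      exp (-(m ^ 2) * s / 2) / √s * (y - a) ^ (-(1 / 2) : ℝ) := by
    intro y hy
    have hya : 0 < y - a := sub_pos.2 hy.1
    have hexp : exp (-(m ^ 2) * y / 2) ≤ exp (-(m ^ 2) * s / 2) :=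
      exp_le_exp.2 (by nlinarith [sq_nonneg m, hy.1])
    rw [sqrt_mul (hs.le.trans hsa), rpow_neg hya.le, ← sqrt_eq_rpow, ← div_eq_mul_inv, div_div]
    exact div_le_div₀ (exp_nonneg _) hexp (by positivity) (by gcongr)
  calc ∫ y in a..t, exp (-(m ^ 2) * y / 2) / √(a * (y - a))
      ≤ ∫ y in a..t, exp (-(m ^ 2) * s / 2) / √s * (y - a) ^ (-(1 / 2) : ℝ) := by
        simp only [integral_of_le hat]
        refine setIntegral_mono_of_nonneg (fun y _ => by positivity) hbound ?_
        exact ((intervalIntegrable_sub_rpow (by norm_num) a a t).const_mul _).1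
    _ = exp (-(m ^ 2) * s / 2) / √s * (2 * √(t - a)) := by
        rw [intervalIntegral.integral_const_mul,
          integral_comp_sub_right (fun x => x ^ (-(1 / 2) : ℝ)), sub_self, integral_rpow_neg_half]

theorem lastZeroDensity_le {m s t a : ℝ} (hs : 0 < s) (ha : a ∈ Ioo s t) :
    lastZeroDensity m t a ≤
      exp (-(m ^ 2) * s / 2) / (π * √s) * ((t - a) ^ (-(1 / 2) : ℝ) + m ^ 2 * √(t - a)) := by
  have hta : 0 < t - a := sub_pos.2 ha.2
  have hfirst : exp (-(m ^ 2) * t / 2) / (π * √(a * (t - a))) ≤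
      exp (-(m ^ 2) * s / 2) / (π * √s) * (t - a) ^ (-(1 / 2) : ℝ) := by
    have hexp : exp (-(m ^ 2) * t / 2) ≤ exp (-(m ^ 2) * s / 2) :=
      exp_le_exp.2 (by nlinarith [sq_nonneg m, ha.1.trans ha.2])
    rw [sqrt_mul (hs.trans ha.1).le, rpow_neg hta.le, ← sqrt_eq_rpow, ← div_eq_mul_inv, div_div,
      mul_assoc]
    exact div_le_div₀ (exp_nonneg _) hexp (by positivity) (by gcongr; exact ha.1.le)
  have hsecond := integral_exp_div_sqrt_le (m := m) hs ha.1.le ha.2.le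
  calc lastZeroDensity m t a
      ≤ exp (-(m ^ 2) * s / 2) / (π * √s) * (t - a) ^ (-(1 / 2) : ℝ) +
          m ^ 2 / (2 * π) * (exp (-(m ^ 2) * s / 2) / √s * (2 * √(t - a))) :=
        add_le_add hfirst (mul_le_mul_of_nonneg_left hsecond (by positivity))
    _ = exp (-(m ^ 2) * s / 2) / (π * √s) * ((t - a) ^ (-(1 / 2) : ℝ) + m ^ 2 * √(t - a)) := by
        ring

theorem intervalIntegrable_lastZeroDensity {m s t : ℝ} (hs : 0 < s) (hst : s ≤ t) :
    IntervalIntegrable (lastZeroDensity m t) volume s t := by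
  have hbound : IntervalIntegrable (fun a => exp (-(m ^ 2) * s / 2) / (π * √s) *
      ((t - a) ^ (-(1 / 2) : ℝ) + m ^ 2 * √(t - a))) volume s t :=
    ((intervalIntegrable_rsub_rpow (by norm_num) t s t).add
      (((continuous_const.sub continuous_id).sqrt.intervalIntegrable s t).const_mul _)).const_mul _
  refine hbound.mono_fun' (measurable_lastZeroDensity m t).aestronglyMeasurable ?_
  rw [uIoc_of_le hst, ← Measure.restrict_congr_set Ioo_ae_eq_Ioc]
  filter_upwards [ae_restrict_mem measurableSet_Ioo] with a ha
  rw [norm_of_nonneg (lastZeroDensity_nonneg ha.2.le)]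
  exact lastZeroDensity_le hs ha

theorem le_integral_lastZeroDensity {m s t : ℝ} (hs : 0 < s) (hst : s ≤ t) :
    (t - s) * (exp (-(m ^ 2) * t / 2) / (π * t)) ≤ ∫ a in s..t, lastZeroDensity m t a := by
  rw [← smul_eq_mul, ← intervalIntegral.integral_const]
  exact integral_mono_on_of_le_Ioo hst intervalIntegrable_const
    (intervalIntegrable_lastZeroDensity hs hst)
    fun a ha => exp_div_le_lastZeroDensity_of_mem_Ioo ⟨hs.trans ha.1, ha.2⟩

theorem integral_lastZeroDensity_le {m s t : ℝ} (hs : 0 < s) (hst : s ≤ t) :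
    ∫ a in s..t, lastZeroDensity m t a ≤
      exp (-(m ^ 2) * s / 2) / (π * √s) *
        (2 * √(t - s) + m ^ 2 * (2 / 3 * (t - s) * √(t - s))) := by
  have hsqrt : IntervalIntegrable (fun a => √(t - a)) volume s t :=
    (continuous_const.sub continuous_id).sqrt.intervalIntegrable s t
  have hrpow := intervalIntegrable_rsub_rpow (r := -(1 / 2)) (by norm_num) t s t
  calc ∫ a in s..t, lastZeroDensity m t a
      ≤ ∫ a in s..t, exp (-(m ^ 2) * s / 2) / (π * √s) *
          ((t - a) ^ (-(1 / 2) : ℝ) + m ^ 2 * √(t - a)) :=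
        integral_mono_on_of_le_Ioo hst (intervalIntegrable_lastZeroDensity hs hst)
          ((hrpow.add (hsqrt.const_mul _)).const_mul _) fun a ha => lastZeroDensity_le hs ha
    _ = exp (-(m ^ 2) * s / 2) / (π * √s) *
          (2 * √(t - s) + m ^ 2 * (2 / 3 * (t - s) * √(t - s))) := by
        rw [intervalIntegral.integral_const_mul, integral_add hrpow (hsqrt.const_mul _),
          intervalIntegral.integral_const_mul,
          integral_comp_sub_left (fun x => x ^ (-(1 / 2) : ℝ)),
          integral_comp_sub_left (fun x => √x), sub_self, integral_rpow_neg_half,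
          integral_sqrt (sub_nonneg.2 hst)]

theorem le_log_div_of_mul_exp_le {I c α r : ℝ} (hc : 0 < c) (hr : 0 < r)
    (h : c * exp (-(r * α)) ≤ I) : -α + log c / r ≤ 1 / r * log I := by
  have hlog := log_le_log (by positivity) h
  rw [log_mul hc.ne' (exp_pos _).ne', log_exp] at hlog
  calc -α + log c / r = 1 / r * (log c + -(r * α)) := by field_simp; ring
    _ ≤ 1 / r * log I := by gcongr

theorem log_div_le_of_le_mul_exp {I A B α r : ℝ} (hI : 0 < I) (hA : 0 < A) (hB : 0 ≤ B)
    (hr : 0 < r) (h : I ≤ (A + r * B) * exp (-(r * α))) : 1 / r * log I ≤ -α + B + A / r := by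
  have hK : 0 < A + r * B := by positivity
  have hlog := log_le_log hI h
  rw [log_mul hK.ne' (exp_pos _).ne', log_exp] at hlog
  have hlogK : log (A + r * B) ≤ A + r * B := (log_le_sub_one_of_pos hK).trans (by linarith)
  calc 1 / r * log I ≤ 1 / r * (A + r * B + -(r * α)) := by gcongr; linarith
    _ = -α + B + A / r := by field_simp; ring

theorem tendsto_const_add_div_atTop (α L : ℝ) :
    Tendsto (fun r : ℝ => α + L / r) atTop (𝓝 α) := by
  simpa using tendsto_const_nhds.add (tendsto_const_nhds (x := L).div_atTop tendsto_id)

section Sandwich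

variable {v : ℝ → ℝ} {α L β A : ℝ}

/- In `ℝ`, `liminf` is a junk value unless `v` is eventually bounded above, hence `hup`. -/
theorem le_liminf_of_eventually_le_add_div (hlow : ∀ᶠ r in atTop, α + L / r ≤ v r)
    (hup : ∀ᶠ r in atTop, v r ≤ β + A / r) : α ≤ liminf v atTop :=
  (tendsto_const_add_div_atTop α L).liminf_eq.symm.trans_le <|
    liminf_le_liminf hlow (tendsto_const_add_div_atTop α L).isBoundedUnder_ge
      ((tendsto_const_add_div_atTop β A).isBoundedUnder_le.mono_le hup).isCoboundedUnder_ge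

theorem limsup_le_of_eventually_le_add_div (hlow : ∀ᶠ r in atTop, α + L / r ≤ v r)
    (hup : ∀ᶠ r in atTop, v r ≤ β + A / r) : limsup v atTop ≤ β :=
  (limsup_le_limsup hup
      ((tendsto_const_add_div_atTop α L).isBoundedUnder_ge.mono_ge hlow).isCoboundedUnder_le
      (tendsto_const_add_div_atTop β A).isBoundedUnder_le).trans_eq
    (tendsto_const_add_div_atTop β A).limsup_eq

end Sandwich

theorem sq_mul_sqrt {μ r : ℝ} (hr : 0 ≤ r) : (μ * √r) ^ 2 = μ ^ 2 * r := by
  rw [mul_pow, sq_sqrt hr]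

theorem le_log_integral_lastZeroDensity {μ t ε r : ℝ} (hε : 0 < ε) (hεt : ε < t)
    (hr : 0 < r) :
    -(μ ^ 2 * t / 2) + log (ε / (π * t)) / r ≤
      1 / r * log (∫ a in (t - ε)..t, lastZeroDensity (μ * √r) t a) := by
  have ht : 0 < t := hε.trans hεt
  refine le_log_div_of_mul_exp_le (by positivity) hr ?_
  convert le_integral_lastZeroDensity (m := μ * √r) (sub_pos.2 hεt) (sub_le_self t hε.le)
    using 1
  rw [sq_mul_sqrt hr.le]
  ring_nf

theorem log_integral_lastZeroDensity_le {μ t ε r : ℝ} (hε : 0 < ε) (hεt : ε < t)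
    (hr : 0 < r) :
    1 / r * log (∫ a in (t - ε)..t, lastZeroDensity (μ * √r) t a) ≤
      -(μ ^ 2 * (t - ε) / 2) + μ ^ 2 * (2 / 3 * ε * √ε) / (π * √(t - ε)) +
        2 * √ε / (π * √(t - ε)) / r := by
  have hs : 0 < t - ε := sub_pos.2 hεt
  have ht : 0 < t := hε.trans hεt
  have hI := (mul_pos (sub_pos.2 (sub_lt_self t hε)) (by positivity)).trans_le
    (le_integral_lastZeroDensity (m := μ * √r) hs (sub_le_self t hε.le))
  refine log_div_le_of_le_mul_exp hI (by positivity) (by positivity) hr ?_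
  convert integral_lastZeroDensity_le (m := μ * √r) hs (sub_le_self t hε.le) using 1
  rw [sq_mul_sqrt hr.le, sub_sub_cancel]
  field_simp

theorem stmt_10_general (μ t : ℝ) (ht : 0 < t) :
    (∀ ε, 0 < ε → ε < t →
      -(μ ^ 2 * t / 2) ≤
        liminf (fun r : ℝ =>
          (1 / r) * Real.log (∫ a in (t - ε)..t,
            lastZeroDensity (μ * Real.sqrt r) t a)) atTop) ∧
    (∀ δ > 0, ∃ ε₀ > 0, ∀ ε, 0 < ε → ε < ε₀ →
      limsup (fun r : ℝ =>
          (1 / r) * Real.log (∫ a in (t - ε)..t,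
            lastZeroDensity (μ * Real.sqrt r) t a)) atTop ≤
        -(μ ^ 2 * t / 2) + δ) := by
  have hbounds : ∀ ε, 0 < ε → ε < t → _ ∧ _ := fun ε hε hεt =>
    ⟨(eventually_gt_atTop 0).mono fun r hr =>
        le_log_integral_lastZeroDensity (μ := μ) hε hεt hr,
      (eventually_gt_atTop 0).mono fun r hr =>
        log_integral_lastZeroDensity_le (μ := μ) hε hεt hr⟩
  refine ⟨fun ε hε hεt => le_liminf_of_eventually_le_add_div (hbounds ε hε hεt).1
    (hbounds ε hε hεt).2, fun δ hδ => ?_⟩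
  have hrate : Tendsto (fun ε =>
      -(μ ^ 2 * (t - ε) / 2) + μ ^ 2 * (2 / 3 * ε * √ε) / (π * √(t - ε)))
      (𝓝 0) (𝓝 (-(μ ^ 2 * t / 2))) := by
    have hcont : ContinuousAt (fun ε => -(μ ^ 2 * (t - ε) / 2) +
        μ ^ 2 * (2 / 3 * ε * √ε) / (π * √(t - ε))) 0 := by
      fun_prop (disch := (dsimp only; positivity))
    simpa using hcont.tendsto
  obtain ⟨ε₀, hε₀, hsub⟩ := mem_nhdsGT_iff_exists_Ioo_subset.1 <| nhdsWithin_le_nhds <|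
    (hrate.eventually (gt_mem_nhds (lt_add_of_pos_right _ hδ))).and (gt_mem_nhds ht)
  refine ⟨ε₀, hε₀, fun ε hε hεε₀ => ?_⟩
  obtain ⟨hsmall, hεt⟩ := hsub ⟨hε, hεε₀⟩
  exact (limsup_le_of_eventually_le_add_div (hbounds ε hε hεt).1
    (hbounds ε hε hεt).2).trans hsmall.le

theorem stmt_10 (μ t : ℝ) (hμ : μ ≠ 0) (ht : 0 < t) :
    (∀ ε, 0 < ε → ε < t →
      -(μ ^ 2 * t / 2) ≤
        liminf (fun r : ℝ =>
          (1 / r) * Real.log (∫ a in (t - ε)..t,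
            lastZeroDensity (μ * Real.sqrt r) t a)) atTop) ∧
    (∀ δ > 0, ∃ ε₀ > 0, ∀ ε, 0 < ε → ε < ε₀ →
      limsup (fun r : ℝ =>
          (1 / r) * Real.log (∫ a in (t - ε)..t,
            lastZeroDensity (μ * Real.sqrt r) t a)) atTop ≤
        -(μ ^ 2 * t / 2) + δ) :=
  stmt_10_general μ t ht
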